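/- arXiv:2510.05085 — 3 statements merged into one kernel-verified Lean document; each statement's English description precedes it below -/
import Mathlib

section
/- Let a_h > a_0 > 0 be positive reals and λ > 1, and set E₀ = [ψ(a_h) − ψ(λ·a_h)] − [ψ(a_0) − ψ(λ·a_0)]. If a_h, a_0 are positive integers with a_h > a_0, then E₀ > 0. -/
/-!
The recurrence `ψ(x + 1) = ψ(x) + 1/x` and the monotonicity of `ψ` (convexity of `log Γ`) give
`ψ(q) - ψ(p) = ∑ₖ (1/(p + k) - 1/(q + k))` for `0 < p ≤ q`. For `λ > 1` this series is termwise
smaller than `λ` times the telescoping series for `ψ(z + 1) - ψ(z) = 1/z`, so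
`ψ(z + λ) - ψ(z) < λ/z`; at `z = λp` this reads `ψ(λ(p + 1)) - ψ(λp) < ψ(p + 1) - ψ(p)`, and summing
over `p = a₀, …, a_h - 1` gives `E₀ > 0`.
-/

open Filter Finset Topology

/-- The digamma function: the logarithmic derivative of the Gamma function. -/
noncomputable def digamma (x : ℝ) : ℝ :=
  deriv (fun y : ℝ => Real.log (Real.Gamma y)) x

lemma hasDerivAt_log_Gamma {x : ℝ} (hx : 0 < x) :
    HasDerivAt (fun y : ℝ => Real.log (Real.Gamma y)) (digamma x) x :=
  ((Real.differentiableAt_Gamma fun m => ((neg_nonpos.2 m.cast_nonneg).trans_lt hx).ne').log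
    (Real.Gamma_pos_of_pos hx).ne').hasDerivAt

lemma digamma_add_one {x : ℝ} (hx : 0 < x) : digamma (x + 1) = digamma x + 1 / x := by
  have hshift : HasDerivAt (fun y => Real.log (Real.Gamma (y + 1))) (digamma (x + 1)) x :=
    (hasDerivAt_log_Gamma (by linarith)).comp_add_const x 1
  have hrec : HasDerivAt (fun y => Real.log (Real.Gamma y) + Real.log y) (digamma x + 1 / x) x := by
    simpa only [one_div] using (hasDerivAt_log_Gamma hx).fun_add (Real.hasDerivAt_log hx.ne')
  refine hshift.unique (hrec.congr_of_eventuallyEq ?_)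
  filter_upwards [eventually_gt_nhds hx] with y hy
  rw [Real.Gamma_add_one hy.ne', Real.log_mul hy.ne' (Real.Gamma_pos_of_pos hy).ne', add_comm]

lemma digamma_add_nat {x : ℝ} (hx : 0 < x) (n : ℕ) :
    digamma (x + n) = digamma x + ∑ j ∈ range n, 1 / (x + j) := by
  induction n with
  | zero => simp
  | succ n ih =>
    rw [Nat.cast_succ, ← add_assoc, digamma_add_one (by positivity), ih, sum_range_succ, add_assoc]

lemma monotoneOn_digamma : MonotoneOn digamma (Set.Ioi 0) :=
  Real.convexOn_log_Gamma.monotoneOn_deriv fun _ hx => (hasDerivAt_log_Gamma hx).differentiableAt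

lemma tendsto_digamma_add_nat_sub {p q : ℝ} (hp : 0 < p) (hpq : p ≤ q) :
    Tendsto (fun N : ℕ => digamma (q + N) - digamma (p + N)) atTop (𝓝 0) := by
  obtain ⟨m, hm⟩ := exists_nat_ge (q - p)
  have hbound (N : ℕ) : digamma (q + N) - digamma (p + N) ≤ m / (p + N) := by
    have hpN : 0 < p + N := by positivity
    calc digamma (q + N) - digamma (p + N) ≤ digamma (p + N + m) - digamma (p + N) := by
          gcongr
          exact monotoneOn_digamma (Set.mem_Ioi.2 (by linarith)) (Set.mem_Ioi.2 (by positivity))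
            (by linarith)
      _ = ∑ j ∈ range m, 1 / (p + N + j) := by rw [digamma_add_nat hpN]; ring
      _ ≤ ∑ _j ∈ range m, 1 / (p + N) :=
          sum_le_sum fun j _ => one_div_le_one_div_of_le hpN (by simp)
      _ = m / (p + N) := by simp [div_eq_mul_inv]
  refine squeeze_zero (fun N => sub_nonneg.2 ?_) hbound
    (tendsto_const_nhds.div_atTop (tendsto_atTop_add_const_left _ p tendsto_natCast_atTop_atTop))
  exact monotoneOn_digamma (Set.mem_Ioi.2 (by positivity))
    (Set.mem_Ioi.2 (by linarith [(N.cast_nonneg : (0 : ℝ) ≤ N)])) (by linarith)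

lemma hasSum_digamma_sub {p q : ℝ} (hp : 0 < p) (hpq : p ≤ q) :
    HasSum (fun k : ℕ => 1 / (p + k) - 1 / (q + k)) (digamma q - digamma p) := by
  have hq : 0 < q := hp.trans_le hpq
  rw [hasSum_iff_tendsto_nat_of_nonneg fun k =>
    sub_nonneg.2 (one_div_le_one_div_of_le (by positivity) (by linarith))]
  have hpartial (N : ℕ) : ∑ k ∈ range N, (1 / (p + k) - 1 / (q + k))
      = digamma q - digamma p - (digamma (q + N) - digamma (p + N)) := by
    rw [sum_sub_distrib, digamma_add_nat hp, digamma_add_nat hq]; ring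
  simp_rw [hpartial]
  simpa using tendsto_const_nhds.sub (tendsto_digamma_add_nat_sub hp hpq)

lemma one_div_sub_one_div_add_lt {w l : ℝ} (hw : 0 < w) (hl : 1 < l) :
    1 / w - 1 / (w + l) < l * (1 / w - 1 / (w + 1)) := by
  rw [div_sub_div _ _ hw.ne' (by positivity), div_sub_div _ _ hw.ne' (by positivity), mul_div_assoc',
    div_lt_div_iff₀ (by positivity) (by positivity)]
  nlinarith [mul_pos hw hw, mul_pos (mul_pos hw hw) (sub_pos.2 hl)]

lemma digamma_add_sub_lt {z l : ℝ} (hz : 0 < z) (hl : 1 < l) :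
    digamma (z + l) - digamma z < l / z := by
  have hone : HasSum (fun k : ℕ => l * (1 / (z + k) - 1 / (z + 1 + k))) (l / z) := by
    simpa [digamma_add_one hz, div_eq_mul_inv] using
      (hasSum_digamma_sub hz (by linarith : z ≤ z + 1)).mul_left l
  have hterm (k : ℕ) : 1 / (z + k) - 1 / (z + l + k) < l * (1 / (z + k) - 1 / (z + 1 + k)) := by
    simpa only [add_right_comm z] using one_div_sub_one_div_add_lt (w := z + k) (by positivity) hl
  exact hasSum_lt (fun k => (hterm k).le) (hterm 0) (hasSum_digamma_sub hz (by linarith)) hone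

lemma digamma_mul_add_one_sub_lt {p l : ℝ} (hp : 0 < p) (hl : 1 < l) :
    digamma (l * (p + 1)) - digamma (l * p) < digamma (p + 1) - digamma p :=
  calc digamma (l * (p + 1)) - digamma (l * p) = digamma (l * p + l) - digamma (l * p) := by
        rw [mul_add_one]
    _ < l / (l * p) := digamma_add_sub_lt (by nlinarith) hl
    _ = digamma (p + 1) - digamma p := by
        rw [digamma_add_one hp]; field_simp; ring

lemma digamma_mul_add_nat_sub_lt {p l : ℝ} (hp : 0 < p) (hl : 1 < l) {n : ℕ} (hn : 0 < n) :
    digamma (l * (p + n)) - digamma (l * p) < digamma (p + n) - digamma p := by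
  induction n, hn using Nat.le_induction with
  | base => simpa using digamma_mul_add_one_sub_lt hp hl
  | succ n hn ih =>
    have step := digamma_mul_add_one_sub_lt (p := p + n) (by positivity) hl
    rw [Nat.cast_succ, ← add_assoc]
    linarith

/-- For positive integers `a_h > a_0` and `λ > 1`,
`E₀ = [ψ(a_h) - ψ(λ a_h)] - [ψ(a_0) - ψ(λ a_0)] > 0`. -/
theorem stmt9 (l : ℝ) (hl : 1 < l) (ah a0 : ℕ) (ha0 : 1 ≤ a0)
    (hlt : a0 < ah) :
    0 < (digamma (ah : ℝ) - digamma (l * (ah : ℝ)))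
        - (digamma (a0 : ℝ) - digamma (l * (a0 : ℝ))) := by
  have hgap := digamma_mul_add_nat_sub_lt (p := a0) (by exact_mod_cast ha0) hl
    (Nat.sub_pos_of_lt hlt)
  rw [Nat.cast_sub hlt.le, add_sub_cancel] at hgap
  linarith
end

section
/- Let a_h > a_0 ≥ 1 be positive integers and λ > 1, and set V₀ = [ψ₁(a_h) − ψ₁(λ·a_h)] − [ψ₁(a_0) − ψ₁(λ·a_0)]. Then V₀ < 0. -/
/-- The trigamma function: the derivative of the digamma function. -/
noncomputable def trigamma (x : ℝ) : ℝ := deriv digamma x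

open Filter Topology Set Real

lemma hasDerivAt_inv_add_pow (p : ℕ) (c : ℝ) {x : ℝ} (hx : x + c ≠ 0) :
    HasDerivAt (fun y => ((y + c) ^ p)⁻¹) (-p * ((x + c) ^ (p + 1))⁻¹) x := by
  have h := (hasDerivAt_zpow (-p) (x + c) (Or.inl hx)).comp x ((hasDerivAt_id x).add_const c)
  rw [show -(p : ℤ) - 1 = -((p + 1 : ℕ) : ℤ) by push_cast; ring] at h
  simpa only [Function.comp_def, id, zpow_neg, zpow_natCast, Int.cast_neg, Int.cast_natCast,
    mul_one] using h

lemma tendsto_add_natCast_atTop (y : ℝ) : Tendsto (fun k : ℕ => y + k) atTop atTop :=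
  tendsto_atTop_add_const_left _ y tendsto_natCast_atTop_atTop

section Telescoping

variable {f F : ℕ → ℝ}

lemma tendsto_sum_range_sub_succ (hF : Tendsto F atTop (𝓝 0)) :
    Tendsto (fun n => ∑ k ∈ Finset.range n, (F k - F (k + 1))) atTop (𝓝 (F 0)) := by
  simp_rw [Finset.sum_range_sub']
  simpa using tendsto_const_nhds.sub hF

lemma tsum_le_of_le_sub_succ (hf : Summable f) (hF : Tendsto F atTop (𝓝 0))
    (h : ∀ k, f k ≤ F k - F (k + 1)) : ∑' k, f k ≤ F 0 :=
  le_of_tendsto_of_tendsto' hf.hasSum.tendsto_sum_nat (tendsto_sum_range_sub_succ hF)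
    fun _ => Finset.sum_le_sum fun k _ => h k

lemma le_tsum_of_sub_succ_le (hf : Summable f) (hF : Tendsto F atTop (𝓝 0))
    (h : ∀ k, F k - F (k + 1) ≤ f k) : F 0 ≤ ∑' k, f k :=
  le_of_tendsto_of_tendsto' (tendsto_sum_range_sub_succ hF) hf.hasSum.tendsto_sum_nat
    fun _ => Finset.sum_le_sum fun k _ => h k

end Telescoping

noncomputable def hurwitzSum (p : ℕ) (x : ℝ) : ℝ := ∑' k : ℕ, ((x + k) ^ p)⁻¹

lemma summable_inv_add_natCast_pow {x : ℝ} (hx : 0 < x) {p : ℕ} (hp : 2 ≤ p) :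
    Summable fun k : ℕ => ((x + k) ^ p)⁻¹ := by
  refine ((summable_one_div_nat_add_rpow x p).2 (by exact_mod_cast hp)).congr fun k => ?_
  rw [add_comm, abs_of_pos (by positivity), rpow_natCast, one_div]

lemma hasDerivAt_hurwitzSum {p : ℕ} (hp : 2 ≤ p) {x : ℝ} (hx : 0 < x) :
    HasDerivAt (hurwitzSum p) (-p * hurwitzSum (p + 1) x) x := by
  have hx2 : 0 < x / 2 := by linarith
  have hmem : x ∈ Ioi (x / 2) := by rw [mem_Ioi]; linarith
  rw [hurwitzSum, ← tsum_mul_left]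
  refine hasDerivAt_tsum_of_isPreconnected (g := fun (k : ℕ) (y : ℝ) => ((y + k) ^ p)⁻¹)
    (g' := fun (k : ℕ) (y : ℝ) => -p * ((y + k) ^ (p + 1))⁻¹)
    ((summable_inv_add_natCast_pow hx2 (by omega : 2 ≤ p + 1)).mul_left (p : ℝ)) isOpen_Ioi
    isPreconnected_Ioi (fun k y hy => ?_) (fun k y hy => ?_) hmem
    (summable_inv_add_natCast_pow hx hp) hmem
  · exact hasDerivAt_inv_add_pow p k (by have := hx2.trans hy; positivity)
  · have := hx2.trans hy
    rw [norm_mul, norm_neg, norm_natCast, norm_of_nonneg (by positivity)]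
    gcongr
    exact le_of_lt hy

noncomputable def digammaSeries (x : ℝ) : ℝ := ∑' k : ℕ, (((k : ℝ) + 1)⁻¹ - (x + k)⁻¹)

lemma abs_inv_succ_sub_inv_add_le {a y : ℝ} (ha : 0 < a) (ha1 : a ≤ 1) (hay : a ≤ y) (k : ℕ) :
    |((k : ℝ) + 1)⁻¹ - (y + k)⁻¹| ≤ |y - 1| * ((a + k) ^ 2)⁻¹ := by
  have hy : 0 < y := ha.trans_le hay
  rw [inv_sub_inv (by positivity) (by positivity), abs_div,
    abs_of_pos (a := ((k : ℝ) + 1) * (y + k)) (by positivity),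
    show y + k - (k + 1) = y - 1 by ring, div_eq_mul_inv, sq]
  gcongr ?_ * ?_
  exact inv_anti₀ (by positivity)
    (mul_le_mul (by linarith) (by linarith) (by positivity) (by positivity))

lemma hasDerivAt_digammaSeries {x : ℝ} (hx : 0 < x) :
    HasDerivAt digammaSeries (hurwitzSum 2 x) x := by
  set a := min x 1 / 2
  have ha : 0 < a := by positivity
  have hxa : x ∈ Ioi a := by simp only [mem_Ioi, a]; linarith [min_le_left x 1]
  have h1a : (1 : ℝ) ∈ Ioi a := by simp only [mem_Ioi, a]; linarith [min_le_right x 1]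
  -- the series converges at `y = 1`, where all its terms vanish
  refine hasDerivAt_tsum_of_isPreconnected
    (g := fun (k : ℕ) (y : ℝ) => ((k : ℝ) + 1)⁻¹ - (y + k)⁻¹)
    (g' := fun (k : ℕ) (y : ℝ) => ((y + k) ^ 2)⁻¹)
    (summable_inv_add_natCast_pow ha le_rfl) isOpen_Ioi isPreconnected_Ioi
    (fun k y hy => ?_) (fun k y hy => ?_) h1a (by simp [add_comm]) hxa
  · have hyk : y + k ≠ 0 := by have : 0 < y := ha.trans hy; positivity
    exact (((hasDerivAt_id y).add_const (k : ℝ)).inv hyk).const_sub ((k : ℝ) + 1)⁻¹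
      |>.congr_deriv (by rw [neg_div, neg_neg, one_div, id])
  · have : 0 < y := ha.trans hy
    rw [norm_of_nonneg (by positivity)]
    gcongr
    exact le_of_lt hy

lemma tendstoUniformlyOn_digammaSeries {a b : ℝ} (ha : 0 < a) (ha1 : a ≤ 1) :
    TendstoUniformlyOn (fun (n : ℕ) (y : ℝ) => ∑ k ∈ Finset.range n, (((k : ℝ) + 1)⁻¹ - (y + k)⁻¹))
      digammaSeries atTop (Ioo a b) := by
  refine tendstoUniformlyOn_tsum_nat ((summable_inv_add_natCast_pow ha le_rfl).mul_left (b + 1))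
    fun k y hy => ?_
  have hy1 : |y - 1| ≤ b + 1 := abs_le.2 ⟨by linarith [hy.1, hy.2], by linarith [hy.2]⟩
  calc ‖((k : ℝ) + 1)⁻¹ - (y + k)⁻¹‖ ≤ |y - 1| * ((a + k) ^ 2)⁻¹ :=
        abs_inv_succ_sub_inv_add_le ha ha1 hy.1.le k
    _ ≤ (b + 1) * ((a + k) ^ 2)⁻¹ := by gcongr

lemma tendsto_log_sub_sum_inv_succ :
    Tendsto (fun n : ℕ => log n - ∑ k ∈ Finset.range (n + 1), ((k : ℝ) + 1)⁻¹) atTop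
      (𝓝 (-eulerMascheroniConstant)) := by
  have h := (tendsto_harmonic_sub_log.add tendsto_one_div_add_atTop_nhds_zero_nat).neg
  rw [add_zero] at h
  refine h.congr fun n => ?_
  rw [Finset.sum_range_succ, ← one_div]
  simp only [harmonic, Rat.cast_sum, Rat.cast_inv]
  push_cast
  ring

lemma hasDerivAt_log_Gamma_s10 {x : ℝ} (hx : 0 < x) :
    HasDerivAt (fun y => log (Gamma y)) (-eulerMascheroniConstant + digammaSeries x) x := by
  set a := min x 1 / 2
  have ha : 0 < a := by positivity
  have hxa : x ∈ Ioo a (x + 1) := ⟨by simp only [a]; linarith [min_le_left x 1], by linarith⟩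
  have hseries := tendstoUniformlyOn_digammaSeries ha
    (by simp only [a]; linarith [min_le_right x 1]) (b := x + 1)
  refine hasDerivAt_of_tendstoUniformlyOn (f := fun n y => BohrMollerup.logGammaSeq y n)
    (g' := fun y => -eulerMascheroniConstant + digammaSeries y)
    (f' := fun (n : ℕ) y => log n - ∑ k ∈ Finset.range (n + 1), (y + k)⁻¹) isOpen_Ioo ?_ ?_
    (fun y hy => BohrMollerup.tendsto_log_gamma (ha.trans hy.1)) hxa
  · have := (tendsto_log_sub_sum_inv_succ.tendstoUniformlyOn_const (Ioo a (x + 1))).add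
      (fun u hu => (tendsto_add_atTop_nat 1).eventually (hseries u hu))
    refine this.congr (Eventually.of_forall fun n y _ => ?_)
    simp only [Pi.add_apply, Finset.sum_sub_distrib]
    ring
  · refine Eventually.of_forall fun n y hy => ?_
    have hy0 : 0 < y := ha.trans hy.1
    have hlog : HasDerivAt (fun y => ∑ k ∈ Finset.range (n + 1), log (y + k))
        (∑ k ∈ Finset.range (n + 1), (y + k)⁻¹) y :=
      HasDerivAt.fun_sum fun k _ => by
        simpa using ((hasDerivAt_id y).add_const (k : ℝ)).log (by positivity)
    exact ((hasDerivAt_mul_const (log n)).add_const _).sub hlog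

lemma digamma_eq_of_pos {x : ℝ} (hx : 0 < x) :
    digamma x = -eulerMascheroniConstant + digammaSeries x :=
  (hasDerivAt_log_Gamma_s10 hx).deriv

lemma trigamma_eq_hurwitzSum {x : ℝ} (hx : 0 < x) : trigamma x = hurwitzSum 2 x := by
  have hev : digamma =ᶠ[𝓝 x] fun y => -eulerMascheroniConstant + digammaSeries y :=
    eventually_of_mem (isOpen_Ioi.mem_nhds hx) fun y hy => digamma_eq_of_pos hy
  rw [trigamma, hev.deriv_eq, ((hasDerivAt_digammaSeries hx).const_add _).deriv]

/-- Midpoint rule: `z⁻³ ≤ ∫_{z-1/2}^{z+1/2} t⁻³ dt`. -/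
lemma inv_pow_three_le_sub {z : ℝ} (hz : 1 / 2 < z) :
    (z ^ 3)⁻¹ ≤ 2 * ((2 * z - 1) ^ 2)⁻¹ - 2 * ((2 * z + 1) ^ 2)⁻¹ := by
  have h1 : 0 < 2 * z - 1 := by linarith
  have h2 : 0 < z := by linarith
  rw [← sub_nonneg]
  have : 2 * ((2 * z - 1) ^ 2)⁻¹ - 2 * ((2 * z + 1) ^ 2)⁻¹ - (z ^ 3)⁻¹ =
      (8 * z ^ 2 - 1) / (z ^ 3 * (2 * z - 1) ^ 2 * (2 * z + 1) ^ 2) := by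
    field_simp; ring
  rw [this]; exact div_nonneg (by nlinarith) (by positivity)

/-- Trapezoid rule: `∫_z^{z+1} t⁻⁴ dt ≤ (z⁻⁴ + (z + 1)⁻⁴) / 2`. -/
lemma sub_le_inv_pow_four {z : ℝ} (hz : 0 < z) :
    ((3 * z ^ 3)⁻¹ + (2 * z ^ 4)⁻¹) - ((3 * (z + 1) ^ 3)⁻¹ + (2 * (z + 1) ^ 4)⁻¹) ≤ (z ^ 4)⁻¹ := by
  rw [← sub_nonneg]
  have : (z ^ 4)⁻¹ - (((3 * z ^ 3)⁻¹ + (2 * z ^ 4)⁻¹) -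
      ((3 * (z + 1) ^ 3)⁻¹ + (2 * (z + 1) ^ 4)⁻¹)) =
      (10 * z ^ 2 + 10 * z + 3) / (6 * z ^ 4 * (z + 1) ^ 4) := by
    field_simp; ring
  rw [this]; positivity

lemma hurwitzSum_three_le {y : ℝ} (hy : 1 / 2 < y) :
    hurwitzSum 3 y ≤ 2 * ((2 * y - 1) ^ 2)⁻¹ := by
  have hF : Tendsto (fun k : ℕ => 2 * ((2 * (y + k) - 1) ^ 2)⁻¹) atTop (𝓝 0) := by
    simpa [sub_eq_add_neg] using ((tendsto_pow_atTop two_ne_zero).comp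
      (tendsto_atTop_add_const_right _ (-1) ((tendsto_add_natCast_atTop y).const_mul_atTop
        two_pos))).inv_tendsto_atTop.const_mul 2
  simpa [hurwitzSum] using tsum_le_of_le_sub_succ
    (summable_inv_add_natCast_pow (by linarith) (by norm_num : 2 ≤ 3)) hF fun k => by
      have := inv_pow_three_le_sub (z := y + k) (by linarith [(k.cast_nonneg : (0 : ℝ) ≤ k)])
      push_cast; ring_nf at this ⊢; exact this

lemma hurwitzSum_four_ge {y : ℝ} (hy : 0 < y) :
    (3 * y ^ 3)⁻¹ + (2 * y ^ 4)⁻¹ ≤ hurwitzSum 4 y := by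
  have h := tendsto_add_natCast_atTop y
  have hF : Tendsto (fun k : ℕ => (3 * (y + k) ^ 3)⁻¹ + (2 * (y + k) ^ 4)⁻¹) atTop (𝓝 0) := by
    simpa using (((tendsto_pow_atTop three_ne_zero).comp h).const_mul_atTop
      three_pos).inv_tendsto_atTop.add
      (((tendsto_pow_atTop four_ne_zero).comp h).const_mul_atTop two_pos).inv_tendsto_atTop
  simpa [hurwitzSum] using le_tsum_of_sub_succ_le
    (summable_inv_add_natCast_pow hy (by norm_num : 2 ≤ 4)) hF fun k => by
      have := sub_le_inv_pow_four (z := y + k) (by positivity)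
      push_cast; rwa [add_assoc] at this

lemma hurwitzSum_three_lt {y : ℝ} (hy : 1 ≤ y) : hurwitzSum 3 y < 3 * y * hurwitzSum 4 y := by
  have hy0 : 0 < y := by linarith
  calc hurwitzSum 3 y ≤ 2 * ((2 * y - 1) ^ 2)⁻¹ := hurwitzSum_three_le (by linarith)
    _ < 3 * y * ((3 * y ^ 3)⁻¹ + (2 * y ^ 4)⁻¹) := by
      have h1 : 0 < 2 * y - 1 := by linarith
      have e : 3 * y * ((3 * y ^ 3)⁻¹ + (2 * y ^ 4)⁻¹) = (2 * y + 3) / (2 * y ^ 3) := by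
        field_simp
      rw [e, ← div_eq_mul_inv, div_lt_div_iff₀ (by positivity) (by positivity)]
      nlinarith [sq_nonneg (y - 1)]
    _ ≤ 3 * y * hurwitzSum 4 y := by gcongr; exact hurwitzSum_four_ge hy0

lemma strictAntiOn_mul_hurwitzSum_three : StrictAntiOn (fun y => y * hurwitzSum 3 y) (Ici 1) := by
  have hderiv : ∀ y ∈ Ici (1 : ℝ), HasDerivAt (fun y => y * hurwitzSum 3 y)
      (hurwitzSum 3 y - 3 * y * hurwitzSum 4 y) y := fun y hy => by
    refine ((hasDerivAt_id y).fun_mul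
      (hasDerivAt_hurwitzSum (p := 3) (by norm_num) (zero_lt_one.trans_le hy))).congr_deriv ?_
    norm_num; ring
  refine strictAntiOn_of_hasDerivWithinAt_neg (convex_Ici 1)
    (fun y hy => (hderiv y hy).continuousAt.continuousWithinAt)
    (fun y hy => (hderiv y (interior_subset hy)).hasDerivWithinAt) fun y hy => ?_
  exact sub_neg.2 (hurwitzSum_three_lt (interior_subset hy))

lemma strictAntiOn_hurwitzSum_two_sub_comp_mul {l : ℝ} (hl : 1 < l) :
    StrictAntiOn (fun x => hurwitzSum 2 x - hurwitzSum 2 (l * x)) (Ici 1) := by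
  have hderiv : ∀ x ∈ Ici (1 : ℝ), HasDerivAt (fun x => hurwitzSum 2 x - hurwitzSum 2 (l * x))
      (2 * (l * hurwitzSum 3 (l * x) - hurwitzSum 3 x)) x := fun x hx => by
    have hx : (0 : ℝ) < x := zero_lt_one.trans_le hx
    refine ((hasDerivAt_hurwitzSum le_rfl hx).fun_sub ((hasDerivAt_hurwitzSum le_rfl
      (mul_pos (zero_lt_one.trans hl) hx)).comp x ((hasDerivAt_id x).const_mul l))).congr_deriv ?_
    norm_num; ring
  refine strictAntiOn_of_hasDerivWithinAt_neg (convex_Ici 1)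
    (fun x hx => (hderiv x hx).continuousAt.continuousWithinAt)
    (fun x hx => (hderiv x (interior_subset hx)).hasDerivWithinAt) fun x hx => ?_
  have hx : (1 : ℝ) ≤ x := interior_subset hx
  have hlx : x < l * x := lt_mul_of_one_lt_left (by linarith) hl
  have key := strictAntiOn_mul_hurwitzSum_three hx (hx.trans hlx.le) hlx
  have : l * hurwitzSum 3 (l * x) < hurwitzSum 3 x :=
    lt_of_mul_lt_mul_left (by linarith [key]) (by linarith : (0 : ℝ) ≤ x)
  linarith

/-- For positive integers `a_h > a_0 ≥ 1` and `λ > 1`,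
`V₀ = [ψ₁(a_h) - ψ₁(λ a_h)] - [ψ₁(a_0) - ψ₁(λ a_0)] < 0`. -/
theorem stmt10 (l : ℝ) (hl : 1 < l) (ah a0 : ℕ) (ha0 : 1 ≤ a0)
    (hlt : a0 < ah) :
    (trigamma (ah : ℝ) - trigamma (l * (ah : ℝ)))
        - (trigamma (a0 : ℝ) - trigamma (l * (a0 : ℝ))) < 0 := by
  have h0 : (1 : ℝ) ≤ a0 := by exact_mod_cast ha0
  have hh : (a0 : ℝ) < ah := by exact_mod_cast hlt
  have h1 : (1 : ℝ) ≤ ah := h0.trans hh.le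
  have hψ₁ : ∀ x : ℝ, 1 ≤ x →
      trigamma x - trigamma (l * x) = hurwitzSum 2 x - hurwitzSum 2 (l * x) := fun x hx => by
    rw [trigamma_eq_hurwitzSum (by linarith), trigamma_eq_hurwitzSum (by nlinarith)]
  rw [hψ₁ _ h1, hψ₁ _ h0]
  exact sub_neg.2 (strictAntiOn_hurwitzSum_two_sub_comp_mul hl h0 h1 hh)
end

section
/- Let n be a positive integer and x_h a positive integer with x_h < n_h/(n+2) for a positive integer n_h. Then (x_h + 1)·S(n + n_h − x_h + 1) < S(n + 1), where S(t) = 1/t + 1/t². Equivalently, x_h + 1 < ((n+2)/(n+1)²)·(n+1+n_h−x_h)²/(n+2+n_h−x_h). -/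
/-- For positive integers `n, n_h, x_h` with `x_h (n+2) < n_h`,
`(x_h+1) S(n+n_h-x_h+1) < S(n+1)` where `S(t) = 1/t + 1/t²`; equivalently
`x_h+1 < ((n+2)/(n+1)²)·(n+1+n_h-x_h)²/(n+2+n_h-x_h)`. -/
theorem stmt13 (n nh xh : ℕ) (hn : 1 ≤ n) (hnh : 1 ≤ nh) (hxh : 1 ≤ xh)
    (h : xh * (n + 2) < nh) :
    (((xh : ℝ) + 1) * (1 / ((n : ℝ) + (nh : ℝ) - (xh : ℝ) + 1)
          + 1 / ((n : ℝ) + (nh : ℝ) - (xh : ℝ) + 1)^2)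
        < 1 / ((n : ℝ) + 1) + 1 / ((n : ℝ) + 1)^2) ∧
    ((xh : ℝ) + 1 < (((n : ℝ) + 2) / ((n : ℝ) + 1)^2)
        * (((n : ℝ) + 1 + (nh : ℝ) - (xh : ℝ))^2
            / ((n : ℝ) + 2 + (nh : ℝ) - (xh : ℝ)))) := by
  have hN : (1:ℝ) ≤ (n:ℝ) := by exact_mod_cast hn
  have hX : (1:ℝ) ≤ (xh:ℝ) := by exact_mod_cast hxh
  have hB : (xh:ℝ) * ((n:ℝ) + 2) + 1 ≤ (nh:ℝ) := by
    have : (xh * (n + 2) + 1 : ℕ) ≤ nh := h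
    exact_mod_cast this
  set T : ℝ := (n:ℝ) + (nh:ℝ) - (xh:ℝ) + 1 with hT
  have hT1 : ((n:ℝ) + 1) * ((xh:ℝ) + 1) + 1 ≤ T := by rw [hT]; nlinarith
  have hTpos : 0 < T := by nlinarith
  have hY : ((xh:ℝ) + 1) * ((n:ℝ) + 1) ≤ T - 1 := by linarith
  have key : ((xh:ℝ) + 1) * (T + 1) * ((n:ℝ) + 1)^2 < ((n:ℝ) + 2) * T^2 := by
    nlinarith [mul_le_mul_of_nonneg_right hY (show (0:ℝ) ≤ ((n:ℝ)+1)*(T+1) by positivity),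
      sq_nonneg T]
  have hTne : T ≠ 0 := ne_of_gt hTpos
  have hNne : ((n:ℝ) + 1) ≠ 0 := by positivity
  constructor
  · rw [div_add_div _ _ hTne (pow_ne_zero 2 hTne), div_add_div _ _ hNne (pow_ne_zero 2 hNne),
      ← mul_div_assoc, div_lt_div_iff₀ (by positivity) (by positivity)]
    nlinarith [mul_lt_mul_of_pos_right key (mul_pos hTpos (show (0:ℝ) < (n:ℝ)+1 by positivity))]
  · have hT2 : ((n:ℝ) + 1 + (nh:ℝ) - (xh:ℝ)) = T := by rw [hT]; ring
    have hT3 : ((n:ℝ) + 2 + (nh:ℝ) - (xh:ℝ)) = T + 1 := by rw [hT]; ring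
    rw [hT2, hT3, div_mul_div_comm, lt_div_iff₀ (by positivity)]
    nlinarith [key]
end
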